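/- Let V be a commutative ring, I an idempotent ideal with Ĩ flat. For any V-modules M, N with M firm, the natural map Hom_V(M, Ĩ ⊗_V N) → Hom_V(M, N) induced by the counit is a bijection. -/
import Mathlib


open TensorProduct

noncomputable section

variable {V : Type} [CommRing V]

/-- The multiplication map `Ĩ = I ⊗[V] I → V` induced by the inclusion. -/
def idealMul (I : Ideal V) : (↥I ⊗[V] ↥I) →ₗ[V] V :=
  TensorProduct.lift (((LinearMap.mul V V).comp I.subtype).compl₂ I.subtype)

/-- The multiplication map `I ⊗[V] M → M`. -/
def smulMap (I : Ideal V) (M : Type) [AddCommGroup M] [Module V M] :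
    (↥I ⊗[V] M) →ₗ[V] M :=
  TensorProduct.lift ((LinearMap.lsmul V M).comp I.subtype)

/-- The counit `Ĩ ⊗[V] M → M`. -/
def tildeSmulMap (I : Ideal V) (M : Type) [AddCommGroup M] [Module V M] :
    ((↥I ⊗[V] ↥I) ⊗[V] M) →ₗ[V] M :=
  TensorProduct.lift ((LinearMap.lsmul V M).comp (idealMul I))

/-- Key scalar identity in `Ĩ`: `(ab) • (c ⊗ d) = (cd) • (a ⊗ b)`. -/
lemma firm_key (I : Ideal V) (a b c d : ↥I) :
    ((a:V) * (b:V)) • (c ⊗ₜ[V] d : ↥I ⊗[V] ↥I) = ((c:V) * (d:V)) • (a ⊗ₜ[V] b) := by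
  have h1 : (((a:V) * b) • c : ↥I) = ((b:V) * c) • a := by ext; simp; ring
  have h2 : (((c:V) * d) • b : ↥I) = ((b:V) * c) • d := by ext; simp; ring
  rw [smul_tmul', h1, smul_tmul, smul_tmul', smul_tmul, h2]

/-- Coassociativity: the counit at `Ĩ ⊗ N` agrees with `id ⊗ (counit at N)`. -/
lemma firm_coassoc (I : Ideal V) (N : Type) [AddCommGroup N] [Module V N] :
    tildeSmulMap I ((↥I ⊗[V] ↥I) ⊗[V] N)
      = LinearMap.lTensor (↥I ⊗[V] ↥I) (tildeSmulMap I N) := by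
  ext a b c d n
  simpa [tildeSmulMap, idealMul, TensorProduct.smul_tmul'] using
    congrArg (· ⊗ₜ[V] n) (firm_key I a b c d)

/-- The counit factors through two copies of the `I`-action. -/
lemma firm_factor (I : Ideal V) (M : Type) [AddCommGroup M] [Module V M] :
    tildeSmulMap I M = (smulMap I M) ∘ₗ (LinearMap.lTensor ↥I (smulMap I M)) ∘ₗ
      (TensorProduct.assoc V ↥I ↥I M).toLinearMap := by
  ext a b m
  simp [tildeSmulMap, smulMap, idealMul, mul_smul, smul_comm ((a:V)) ((b:V))]

/-- For a firm module `M`, the counit `Ĩ ⊗ M → M` is bijective. -/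
lemma firm_tilde_bij (I : Ideal V) (M : Type) [AddCommGroup M] [Module V M]
    (hM : Function.Bijective (smulMap I M)) :
    Function.Bijective (tildeSmulMap I M) := by
  rw [firm_factor]
  let e := LinearEquiv.ofBijective (smulMap I M) hM
  have h2 : Function.Bijective (LinearMap.lTensor ↥I (smulMap I M)) := by
    have : LinearMap.lTensor ↥I (smulMap I M) = (e.lTensor ↥I : _ →ₗ[V] _) := by
      ext x m; rfl
    rw [this]; exact (e.lTensor ↥I).bijective
  exact hM.comp (h2.comp (TensorProduct.assoc V ↥I ↥I M).bijective)

/-- Naturality of the counit. -/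
lemma firm_naturality (I : Ideal V) (X Y : Type) [AddCommGroup X] [Module V X]
    [AddCommGroup Y] [Module V Y] (f : X →ₗ[V] Y) :
    (tildeSmulMap I Y) ∘ₗ (LinearMap.lTensor (↥I ⊗[V] ↥I) f) = f ∘ₗ tildeSmulMap I X := by
  ext a b x
  simp [tildeSmulMap, idealMul]

/-- for `M` firm, composition with the counit `Ĩ ⊗ N → N` gives a
bijection `Hom_V(M, Ĩ ⊗ N) → Hom_V(M, N)`. -/
theorem firm_colocal
    (I : Ideal V) (hI : I * I = I) (hflat : Module.Flat V (↥I ⊗[V] ↥I))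
    (M N : Type) [AddCommGroup M] [Module V M] [AddCommGroup N] [Module V N]
    (hM : Function.Bijective (smulMap I M)) :
    Function.Bijective
      (fun h : M →ₗ[V] ((↥I ⊗[V] ↥I) ⊗[V] N) => (tildeSmulMap I N) ∘ₗ h) := by
  have hεM := firm_tilde_bij I M hM
  constructor
  · intro h h' hh
    simp only at hh
    have fact : ∀ g : M →ₗ[V] ((↥I ⊗[V] ↥I) ⊗[V] N),
        g ∘ₗ tildeSmulMap I M
          = LinearMap.lTensor (↥I ⊗[V] ↥I) ((tildeSmulMap I N) ∘ₗ g) := by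
      intro g
      rw [LinearMap.lTensor_comp, ← firm_coassoc,
        firm_naturality I M ((↥I ⊗[V] ↥I) ⊗[V] N) g]
    have h1 : h ∘ₗ tildeSmulMap I M = h' ∘ₗ tildeSmulMap I M := by
      rw [fact, fact, hh]
    ext m
    obtain ⟨x, rfl⟩ := hεM.2 m
    exact congrFun (congrArg DFunLike.coe h1) x
  · intro f
    let e := LinearEquiv.ofBijective (tildeSmulMap I M) hεM
    refine ⟨(LinearMap.lTensor (↥I ⊗[V] ↥I) f) ∘ₗ (e.symm : M →ₗ[V] _), ?_⟩
    simp only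
    rw [← LinearMap.comp_assoc, firm_naturality, LinearMap.comp_assoc]
    have : (tildeSmulMap I M) ∘ₗ (e.symm : M →ₗ[V] _) = LinearMap.id := by
      ext m; exact e.apply_symm_apply m
    rw [this, LinearMap.comp_id]

end
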